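/- The length of a zigzag path is well defined: if a continuous map b : [0,1] → [0,1] is both a zigzag path of length n and a zigzag path of length m, then n = m. (This is the claim of 1.3(a) that every controlled path of c𝕀∼ has a well-defined integral length.) -/

import Mathlib

open Set

/-- A continuous map `b : [0,1] → [0,1]` is a *zigzag path of length `n`* if (for `n ≥ 1`)
there is a partition `0 = t₀ < t₁ < ⋯ < tₙ = 1` such that `b (t i) = 1` for odd `i`,
`b (t i) = 0` for even `i` (in particular `b 0 = 0`), and `b` is nondecreasing on
`[t_{i-1}, t_i]` for odd `i`, nonincreasing there for even `i`; for `n = 0` it is the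
constant map at `0`. -/
def IsZigzag (b : ℝ → ℝ) (n : ℕ) : Prop :=
  ContinuousOn b (Icc 0 1) ∧ (∀ t ∈ Icc (0:ℝ) 1, b t ∈ Icc (0:ℝ) 1) ∧
  ((n = 0 ∧ ∀ t ∈ Icc (0:ℝ) 1, b t = 0) ∨
   (1 ≤ n ∧ ∃ t : ℕ → ℝ, t 0 = 0 ∧ t n = 1 ∧
     (∀ i < n, t i < t (i + 1)) ∧
     (∀ i ≤ n, b (t i) = if Odd i then 1 else 0) ∧
     (∀ i, 1 ≤ i → i ≤ n →
       if Odd i then MonotoneOn b (Icc (t (i - 1)) (t i))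
       else AntitoneOn b (Icc (t (i - 1)) (t i)))))

/-! The length of a zigzag path is the largest `k` admitting points `u 0 < ⋯ < u k` in `[0,1]`
with `b (u i) = 0` for even `i` and `b (u i) = 1` for odd `i`. The partition itself is such a
sequence. Conversely, since `b` is monotone or antitone on each piece and takes the values `0`
and `1` at its ends, every `u i` is joined to some partition point `t (j i)` by a segment on
which `b` is constant; consecutive `u i` carry different values, so these segments cannot
cross, `j` is strictly increasing, and `k ≤ n`. -/

section OrderLemmas

variable {α β : Type*} [LinearOrder α] {f : α → β} {s : Set α} {x y z : α}

theorem MonotoneOn.eq_of_mem_uIcc [PartialOrder β] (hf : MonotoneOn f s) (hs : s.OrdConnected)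
    (hx : x ∈ s) (hy : y ∈ s) (hxy : f x = f y) (hz : z ∈ uIcc x y) : f z = f x := by
  have hzs : z ∈ s := hs.uIcc_subset hx hy hz
  rcases mem_uIcc.1 hz with ⟨hxz, hzy⟩ | ⟨hyz, hzx⟩
  · exact le_antisymm (hxy ▸ hf hzs hy hzy) (hf hx hzs hxz)
  · exact le_antisymm (hf hzs hx hzx) (hxy ▸ hf hy hzs hyz)

theorem AntitoneOn.eq_of_mem_uIcc [PartialOrder β] (hf : AntitoneOn f s) (hs : s.OrdConnected)
    (hx : x ∈ s) (hy : y ∈ s) (hxy : f x = f y) (hz : z ∈ uIcc x y) : f z = f x :=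
  hf.dual_right.eq_of_mem_uIcc hs hx hy (congrArg OrderDual.toDual hxy) hz

theorem lt_of_forall_mem_uIcc_eq {T S : α} (hxy : x < y) (hfxy : f x ≠ f y)
    (hT : ∀ z ∈ uIcc x T, f z = f x) (hS : ∀ z ∈ uIcc y S, f z = f y) : T < S := by
  by_contra! hST
  rcases le_or_gt y T with hyT | hTy
  · exact hfxy (hT y (mem_uIcc.2 (Or.inl ⟨hxy.le, hyT⟩))).symm
  · exact hfxy ((hT T right_mem_uIcc).symm.trans (hS T (mem_uIcc.2 (Or.inr ⟨hST, hTy.le⟩))))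

end OrderLemmas

structure IsZigzagPartition (b : ℝ → ℝ) (n : ℕ) (t : ℕ → ℝ) : Prop where
  zero : t 0 = 0
  last : t n = 1
  lt_succ : ∀ i < n, t i < t (i + 1)
  apply_eq : ∀ i ≤ n, b (t i) = if Odd i then 1 else 0
  piece : ∀ i, 1 ≤ i → i ≤ n →
    if Odd i then MonotoneOn b (Icc (t (i - 1)) (t i)) else AntitoneOn b (Icc (t (i - 1)) (t i))

structure IsAlternating (b : ℝ → ℝ) (u : ℕ → ℝ) (k : ℕ) : Prop where
  lt_succ : ∀ i < k, u i < u (i + 1)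
  mem_Icc : ∀ i ≤ k, u i ∈ Icc 0 1
  apply_eq : ∀ i ≤ k, b (u i) = if Odd i then 1 else 0

namespace IsZigzagPartition

variable {b : ℝ → ℝ} {n : ℕ} {t : ℕ → ℝ} (ht : IsZigzagPartition b n t)
include ht

theorem strictMonoOn : StrictMonoOn t (Iic n) :=
  strictMonoOn_Iic_of_lt_succ ht.lt_succ

theorem isAlternating : IsAlternating b t n where
  lt_succ := ht.lt_succ
  mem_Icc i hi := by
    have hmono := ht.strictMonoOn.monotoneOn
    exact ⟨ht.zero ▸ hmono (Nat.zero_le _) hi (Nat.zero_le _), ht.last ▸ hmono hi (mem_Iic.2 le_rfl) hi⟩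
  apply_eq := ht.apply_eq

theorem monotoneOn_or_antitoneOn {i : ℕ} (hi : i < n) :
    MonotoneOn b (Icc (t i) (t (i + 1))) ∨ AntitoneOn b (Icc (t i) (t (i + 1))) := by
  have h := ht.piece (i + 1) (by omega) hi
  simp only [add_tsub_cancel_right] at h
  split_ifs at h
  exacts [Or.inl h, Or.inr h]

theorem exists_forall_mem_uIcc_eq {x : ℝ} (hx : x ∈ Icc 0 1) (hbx : b x = 0 ∨ b x = 1) :
    ∃ j ≤ n, ∀ z ∈ uIcc x (t j), b z = b x := by
  rcases hx.2.eq_or_lt with rfl | hx1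
  · refine ⟨n, le_rfl, fun z hz => ?_⟩
    rw [ht.last, uIcc_self, mem_singleton_iff] at hz
    rw [hz]
  obtain ⟨i, hi, hxi⟩ : ∃ i < n, x ∈ Ico (t i) (t (i + 1)) := by
    simpa [and_left_comm] using Ico_subset_biUnion_Ico n t ⟨ht.zero ▸ hx.1, ht.last ▸ hx1⟩
  have hxi : x ∈ Icc (t i) (t (i + 1)) := Ico_subset_Icc_self hxi
  have hconst : ∀ y ∈ Icc (t i) (t (i + 1)), b x = b y → ∀ z ∈ uIcc x y, b z = b x :=
    fun y hy hxy z hz => (ht.monotoneOn_or_antitoneOn hi).elim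
      (·.eq_of_mem_uIcc ordConnected_Icc hxi hy hxy hz)
      (·.eq_of_mem_uIcc ordConnected_Icc hxi hy hxy hz)
  have hle : t i ≤ t (i + 1) := (ht.lt_succ i hi).le
  have hendpoint : b x = b (t i) ∨ b x = b (t (i + 1)) := by
    simp only [ht.apply_eq i hi.le, ht.apply_eq (i + 1) hi, Nat.odd_add_one]
    split_ifs <;> tauto
  rcases hendpoint with h | h
  · exact ⟨i, hi.le, hconst _ (left_mem_Icc.2 hle) h⟩
  · exact ⟨i + 1, hi, hconst _ (right_mem_Icc.2 hle) h⟩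

theorem le_of_isAlternating {u : ℕ → ℝ} {k : ℕ} (hu : IsAlternating b u k) : k ≤ n := by
  have hexists : ∀ i, ∃ j, i ≤ k → j ≤ n ∧ ∀ z ∈ uIcc (u i) (t j), b z = b (u i) := by
    intro i
    by_cases hi : i ≤ k
    · obtain ⟨j, hj⟩ := ht.exists_forall_mem_uIcc_eq (hu.mem_Icc i hi)
        (by rw [hu.apply_eq i hi]; split_ifs <;> simp)
      exact ⟨j, fun _ => hj⟩
    · exact ⟨0, fun h => absurd h hi⟩
  choose j hj using hexists
  have hmono : StrictMonoOn j (Iic k) := strictMonoOn_Iic_of_lt_succ fun i hi => by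
    obtain ⟨hjn, hconst⟩ := hj i hi.le
    obtain ⟨hjn', hconst'⟩ := hj (i + 1) hi
    have hne : b (u i) ≠ b (u (i + 1)) := by
      simp only [hu.apply_eq i hi.le, hu.apply_eq (i + 1) hi, Nat.odd_add_one]
      split_ifs <;> norm_num
    exact (ht.strictMonoOn.lt_iff_lt hjn hjn').1
      (lt_of_forall_mem_uIcc_eq (hu.lt_succ i hi) hne hconst hconst')
  exact (hmono.Iic_id_le k le_rfl).trans (hj k le_rfl).1

end IsZigzagPartition

namespace IsZigzag

variable {b : ℝ → ℝ} {n : ℕ}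

theorem exists_isAlternating (hb : IsZigzag b n) : ∃ u, IsAlternating b u n := by
  obtain ⟨-, -, ⟨rfl, hb0⟩ | ⟨-, t, ht0, htn, hlt, hval, hpiece⟩⟩ := hb
  · exact ⟨fun _ => 0, ⟨by simp, by simp, by simpa using hb0 0 (by simp)⟩⟩
  · exact ⟨t, (IsZigzagPartition.mk ht0 htn hlt hval hpiece).isAlternating⟩

theorem le_of_isAlternating {u : ℕ → ℝ} {k : ℕ} (hb : IsZigzag b n) (hu : IsAlternating b u k) :
    k ≤ n := by
  obtain ⟨-, -, ⟨rfl, hb0⟩ | ⟨-, t, ht0, htn, hlt, hval, hpiece⟩⟩ := hb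
  · by_contra! hk
    have h1 := hu.apply_eq 1 hk
    rw [hb0 _ (hu.mem_Icc 1 hk)] at h1
    norm_num at h1
  · exact (IsZigzagPartition.mk ht0 htn hlt hval hpiece).le_of_isAlternating hu

end IsZigzag

theorem zigzag_length_unique (b : ℝ → ℝ) (n m : ℕ)
    (hn : IsZigzag b n) (hm : IsZigzag b m) : n = m := by
  obtain ⟨u, hu⟩ := hn.exists_isAlternating
  obtain ⟨v, hv⟩ := hm.exists_isAlternating
  exact le_antisymm (hm.le_of_isAlternating hu) (hn.le_of_isAlternating hv)
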